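/- arXiv:1005.4401 — 4 statements merged into one kernel-verified Lean document; each statement's English description precedes it below -/
import Mathlib

section
/- For every positive integer k and every integer n ≥ 1, the power sum p_n(k) = ∑_{j=1}^{k} j^{n+1} + ∑_{j=k+1}^{2k} (2k - j) j^n is a polynomial in k of degree n + 2 with leading coefficient (2^{n+2} - 2)/((n+1)(n+2)). -/
/-!
Write `S_p(m) = ∑_{j=1}^m j^p`. Splitting `(2k - j) j^n = 2k j^n - j^{n+1}` gives
`p_n(k) = 2 S_{n+1}(k) - S_{n+1}(2k) + 2k (S_n(2k) - S_n(k))`. By Faulhaber's formula `S_p` is a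
polynomial of degree `p + 1` with leading coefficient `1 / (p + 1)`, so the right-hand side is a
polynomial of degree at most `n + 2` whose coefficient of `k^{n+2}` is
`(2 - 2^{n+2}) / (n + 2) + 2 (2^{n+1} - 1) / (n + 1) = (2^{n+2} - 2) / ((n + 1) (n + 2)) ≠ 0`.
-/

/-- The power sum `p_n(k) = ∑_{j=1}^{k} j^{n+1} + ∑_{j=k+1}^{2k} (2k - j) j^n`, as a rational. -/
def powerSum (n k : ℕ) : ℚ :=
  (∑ j ∈ Finset.Icc 1 k, (j : ℚ) ^ (n + 1)) +
    ∑ j ∈ Finset.Icc (k + 1) (2 * k), ((2 * k : ℚ) - j) * (j : ℚ) ^ n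

open Polynomial Finset

noncomputable def faulhaber (p : ℕ) : ℚ[X] :=
  ∑ i ∈ range (p + 1), C (bernoulli' i * (p + 1).choose i / (p + 1)) * X ^ (p + 1 - i)

lemma faulhaber_eval (p m : ℕ) :
    (faulhaber p).eval (m : ℚ) = ∑ j ∈ Icc 1 m, (j : ℚ) ^ p := by
  rw [← Ico_add_one_right_eq_Icc, sum_Ico_pow]
  simp [faulhaber, eval_finsetSum, div_mul_eq_mul_div]

lemma faulhaber_natDegree_le (p : ℕ) : (faulhaber p).natDegree ≤ p + 1 :=
  natDegree_sum_le_of_forall_le _ _ fun _ _ ↦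
    (natDegree_C_mul_le _ _).trans ((natDegree_X_pow_le _).trans (Nat.sub_le _ _))

lemma faulhaber_coeff_succ (p : ℕ) : (faulhaber p).coeff (p + 1) = 1 / (p + 1) := by
  rw [faulhaber, finsetSum_coeff, sum_eq_single 0]
  · simp
  · intro i _ hi
    rw [coeff_C_mul, coeff_X_pow, if_neg (by omega), mul_zero]
  · simp

lemma sum_Icc_succ_eq_sub {M : Type*} [AddCommGroup M] (f : ℕ → M) {k m : ℕ} (hkm : k ≤ m) :
    ∑ j ∈ Icc (k + 1) m, f j = ∑ j ∈ Icc 1 m, f j - ∑ j ∈ Icc 1 k, f j := by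
  have h := sum_Ioc_consecutive f (Nat.zero_le k) hkm
  simp only [← Icc_add_one_left_eq_Ioc, zero_add] at h
  rw [← h, add_sub_cancel_left]

lemma powerSum_eq (n k : ℕ) :
    powerSum n k =
      2 * ∑ j ∈ Icc 1 k, (j : ℚ) ^ (n + 1) - ∑ j ∈ Icc 1 (2 * k), (j : ℚ) ^ (n + 1) +
      2 * k * (∑ j ∈ Icc 1 (2 * k), (j : ℚ) ^ n - ∑ j ∈ Icc 1 k, (j : ℚ) ^ n) := by
  have hk : k ≤ 2 * k := by omega
  have hsplit : ∑ j ∈ Icc (k + 1) (2 * k), ((2 * k : ℚ) - j) * (j : ℚ) ^ n =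
      2 * k * ∑ j ∈ Icc (k + 1) (2 * k), (j : ℚ) ^ n -
        ∑ j ∈ Icc (k + 1) (2 * k), (j : ℚ) ^ (n + 1) := by
    rw [mul_sum, ← sum_sub_distrib]
    exact sum_congr rfl fun j _ ↦ by ring
  rw [powerSum, hsplit, sum_Icc_succ_eq_sub _ hk, sum_Icc_succ_eq_sub _ hk]
  ring

noncomputable def powerSumPoly (n : ℕ) : ℚ[X] :=
  C 2 * faulhaber (n + 1) - (faulhaber (n + 1)).comp (C 2 * X) +
    C 2 * (X * ((faulhaber n).comp (C 2 * X) - faulhaber n))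

lemma powerSumPoly_eval (n k : ℕ) : (powerSumPoly n).eval (k : ℚ) = powerSum n k := by
  have h2k : (2 * k : ℚ) = ((2 * k : ℕ) : ℚ) := by push_cast; ring
  simp only [powerSumPoly, eval_add, eval_sub, eval_mul, eval_comp, eval_C, eval_X, h2k,
    faulhaber_eval, powerSum_eq]
  push_cast
  ring

lemma natDegree_comp_C_mul_X_le {R : Type*} [Semiring R] (p : R[X]) (r : R) :
    (p.comp (C r * X)).natDegree ≤ p.natDegree :=
  natDegree_comp_le.trans (mul_le_of_le_one_right' ((natDegree_C_mul_le r X).trans natDegree_X_le))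

lemma powerSumPoly_natDegree_le (n : ℕ) : (powerSumPoly n).natDegree ≤ n + 2 := by
  have hF := faulhaber_natDegree_le
  refine natDegree_add_le_of_degree_le ((natDegree_sub_le _ _).trans (max_le ?_ ?_)) ?_
  · exact (natDegree_C_mul_le _ _).trans (hF _)
  · exact (natDegree_comp_C_mul_X_le _ _).trans (hF _)
  · have hD : ((faulhaber n).comp (C 2 * X) - faulhaber n).natDegree ≤ n + 1 :=
      (natDegree_sub_le _ _).trans (max_le ((natDegree_comp_C_mul_X_le _ _).trans (hF n)) (hF n))
    exact (natDegree_C_mul_le _ _).trans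
      ((natDegree_mul_le_of_le natDegree_X_le hD).trans (by omega))

lemma powerSumPoly_coeff (n : ℕ) :
    (powerSumPoly n).coeff (n + 2) = (2 ^ (n + 2) - 2) / ((n + 1) * (n + 2)) := by
  rw [powerSumPoly, coeff_add, coeff_sub, coeff_C_mul, coeff_C_mul, coeff_X_mul, coeff_sub,
    comp_C_mul_X_coeff, comp_C_mul_X_coeff, faulhaber_coeff_succ, faulhaber_coeff_succ]
  push_cast
  field_simp
  ring

theorem stmt_3_general (n : ℕ) :
    ∃ q : Polynomial ℚ, q.natDegree = n + 2 ∧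
      q.leadingCoeff = (2 ^ (n + 2) - 2) / ((n + 1) * (n + 2)) ∧
      ∀ k : ℕ, 0 < k → q.eval (k : ℚ) = powerSum n k := by
  have hcoeff_ne : (powerSumPoly n).coeff (n + 2) ≠ 0 := by
    have h4 : (4 : ℚ) ≤ 2 ^ (n + 2) := by
      rw [pow_add]
      nlinarith [one_le_pow₀ (n := n) (by norm_num : (1 : ℚ) ≤ 2)]
    rw [powerSumPoly_coeff]
    exact div_ne_zero (by linarith) (by positivity)
  have hdeg : (powerSumPoly n).natDegree = n + 2 :=
    (powerSumPoly_natDegree_le n).antisymm (le_natDegree_of_ne_zero hcoeff_ne)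
  refine ⟨powerSumPoly n, hdeg, ?_, fun k _ ↦ powerSumPoly_eval n k⟩
  rw [leadingCoeff, hdeg, powerSumPoly_coeff]

theorem stmt_3 (n : ℕ) (hn : 1 ≤ n) :
    ∃ q : Polynomial ℚ, q.natDegree = n + 2 ∧
      q.leadingCoeff = (2 ^ (n + 2) - 2) / ((n + 1) * (n + 2)) ∧
      ∀ k : ℕ, 0 < k → q.eval (k : ℚ) = powerSum n k :=
  stmt_3_general n
end

section
/- With b_r(k) defined as the coefficient of x^r in ∏_{j=1}^{k} (1 + j x)^j ∏_{j=k+1}^{2k} (1 + j x)^{2k-j}, one has b_3(k) = (1/6) k^9 - (7/12) k^7 + (7/12) k^5 - (1/6) k^3 for all positive integers k. -/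
open Polynomial Finset

lemma cast_choose_three (m : ℕ) : (m.choose 3 : ℚ) = m*(m-1)*(m-2)/6 := by
  induction m with
  | zero => norm_num
  | succ n ih =>
    rw [Nat.choose_succ_succ']
    push_cast [ih, Nat.cast_choose_two]
    ring

lemma coeff_one_add_mul (c : ℚ) (m r : ℕ) :
    ((1 + C c * X)^m).coeff r = (m.choose r) * c^r := by
  rw [add_comm, add_pow]
  rw [finset_sum_coeff]
  have h : ∀ i ∈ Finset.range (m+1),
      ((C c * X) ^ i * 1 ^ (m - i) * (m.choose i : ℚ[X])).coeff r
        = if i = r then (m.choose r : ℚ) * c^r else 0 := by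
    intro i _
    rw [one_pow, mul_one, mul_pow, ← C_pow, mul_assoc, ← C_eq_natCast,
      mul_comm (X^i), ← mul_assoc, ← C_mul, coeff_C_mul, coeff_X_pow]
    by_cases hir : i = r
    · subst hir; simp [mul_comm]
    · simp [hir, Ne.symm hir]
  rw [Finset.sum_congr rfl h, Finset.sum_ite_eq' (Finset.range (m+1)) r]
  split_ifs with hr
  · rfl
  · have : m.choose r = 0 := Nat.choose_eq_zero_of_lt (by simpa using hr)
    simp [this]

lemma coeff_mul_three (p q : ℚ[X]) : (p*q).coeff 3 =
    p.coeff 0 * q.coeff 3 + p.coeff 1 * q.coeff 2 + p.coeff 2 * q.coeff 1 + p.coeff 3 * q.coeff 0 := by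
  rw [coeff_mul, Finset.Nat.sum_antidiagonal_eq_sum_range_succ_mk]
  simp [Finset.sum_range_succ, add_assoc]
lemma coeff_mul_two (p q : ℚ[X]) : (p*q).coeff 2 =
    p.coeff 0 * q.coeff 2 + p.coeff 1 * q.coeff 1 + p.coeff 2 * q.coeff 0 := by
  rw [coeff_mul, Finset.Nat.sum_antidiagonal_eq_sum_range_succ_mk]
  simp [Finset.sum_range_succ, add_assoc]
lemma coeff_mul_one (p q : ℚ[X]) : (p*q).coeff 1 =
    p.coeff 0 * q.coeff 1 + p.coeff 1 * q.coeff 0 := by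
  rw [coeff_mul, Finset.Nat.sum_antidiagonal_eq_sum_range_succ_mk]
  simp [Finset.sum_range_succ, add_assoc]

lemma prod_coeffs (s : Finset ℕ) (m : ℕ → ℕ) :
    (∏ j ∈ s, (1 + C (j:ℚ) * X)^(m j)).coeff 0 = 1 ∧
    (∏ j ∈ s, (1 + C (j:ℚ) * X)^(m j)).coeff 1 = (∑ j ∈ s, (m j : ℚ) * j^1) ∧
    (∏ j ∈ s, (1 + C (j:ℚ) * X)^(m j)).coeff 2 =
      ((∑ j ∈ s, (m j : ℚ) * j^1)^2 - (∑ j ∈ s, (m j : ℚ) * j^2))/2 ∧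
    (∏ j ∈ s, (1 + C (j:ℚ) * X)^(m j)).coeff 3 =
      ((∑ j ∈ s, (m j : ℚ) * j^1)^3 - 3*(∑ j ∈ s, (m j : ℚ) * j^1)*(∑ j ∈ s, (m j : ℚ) * j^2)
        + 2*(∑ j ∈ s, (m j : ℚ) * j^3))/6 := by
  classical
  induction s using Finset.induction_on with
  | empty => simp [coeff_one]
  | @insert a s ha ih =>
    obtain ⟨h0, h1, h2, h3⟩ := ih
    rw [Finset.prod_insert ha]
    rw [Finset.sum_insert ha, Finset.sum_insert ha, Finset.sum_insert ha]
    refine ⟨?_, ?_, ?_, ?_⟩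
    · rw [mul_coeff_zero, h0, coeff_one_add_mul]
      simp
    · rw [coeff_mul_one, h0, h1, coeff_one_add_mul, coeff_one_add_mul]
      simp [add_comm]
    · rw [coeff_mul_two, h0, h1, h2, coeff_one_add_mul, coeff_one_add_mul, coeff_one_add_mul,
        Nat.cast_choose_two]
      simp only [Nat.choose_zero_right, Nat.choose_one_right, Nat.cast_one]
      ring
    · rw [coeff_mul_three, h0, h1, h2, h3, coeff_one_add_mul, coeff_one_add_mul,
        coeff_one_add_mul, coeff_one_add_mul, Nat.cast_choose_two, cast_choose_three]
      simp only [Nat.choose_zero_right, Nat.choose_one_right, Nat.cast_one]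
      ring

lemma sumpow1 (n : ℕ) : ∑ j ∈ Finset.Ioc 0 n, (j:ℚ) = n*(n+1)/2 := by
  induction n with
  | zero => simp
  | succ n ih => rw [Finset.sum_Ioc_succ_top (Nat.zero_le _), ih]; push_cast; ring

lemma sumpow2 (n : ℕ) : ∑ j ∈ Finset.Ioc 0 n, (j:ℚ)^2 = n*(n+1)*(2*n+1)/6 := by
  induction n with
  | zero => simp
  | succ n ih => rw [Finset.sum_Ioc_succ_top (Nat.zero_le _), ih]; push_cast; ring

lemma sumpow3 (n : ℕ) : ∑ j ∈ Finset.Ioc 0 n, (j:ℚ)^3 = n^2*(n+1)^2/4 := by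
  induction n with
  | zero => simp
  | succ n ih => rw [Finset.sum_Ioc_succ_top (Nat.zero_le _), ih]; push_cast; ring

lemma sumpow4 (n : ℕ) : ∑ j ∈ Finset.Ioc 0 n, (j:ℚ)^4 = n*(n+1)*(2*n+1)*(3*n^2+3*n-1)/30 := by
  induction n with
  | zero => simp
  | succ n ih => rw [Finset.sum_Ioc_succ_top (Nat.zero_le _), ih]; push_cast; ring

lemma sum_Ioc_split (k : ℕ) (f : ℕ → ℚ) :
    ∑ j ∈ Finset.Ioc k (2*k), f j = (∑ j ∈ Finset.Ioc 0 (2*k), f j) - ∑ j ∈ Finset.Ioc 0 k, f j := by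
  rw [← Finset.sum_Ioc_consecutive _ (Nat.zero_le k) (by omega : k ≤ 2*k)]
  ring

lemma sum_m2 (k : ℕ) (p : ℕ) :
    ∑ j ∈ Finset.Ioc k (2*k), ((2*k - j : ℕ) : ℚ) * (j:ℚ)^p
      = 2*k*((∑ j ∈ Finset.Ioc 0 (2*k), (j:ℚ)^p) - ∑ j ∈ Finset.Ioc 0 k, (j:ℚ)^p)
        - ((∑ j ∈ Finset.Ioc 0 (2*k), (j:ℚ)^(p+1)) - ∑ j ∈ Finset.Ioc 0 k, (j:ℚ)^(p+1)) := by
  rw [← sum_Ioc_split, ← sum_Ioc_split, Finset.mul_sum, ← Finset.sum_sub_distrib]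
  refine Finset.sum_congr rfl fun j hj => ?_
  have h2 : j ≤ 2*k := (Finset.mem_Ioc.mp hj).2
  rw [Nat.cast_sub h2]
  push_cast
  ring

lemma sum_id_mul (s : Finset ℕ) (p : ℕ) :
    ∑ j ∈ s, ((j:ℕ):ℚ) * (j:ℚ)^p = ∑ j ∈ s, (j:ℚ)^(p+1) :=
  Finset.sum_congr rfl fun j _ => by ring

/-- The polynomial `∏_{j=1}^{k} (1 + j x)^j · ∏_{j=k+1}^{2k} (1 + j x)^{2k-j}` over ℚ. -/
noncomputable def genPoly (k : ℕ) : Polynomial ℚ :=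
  (∏ j ∈ Finset.Icc 1 k, (1 + Polynomial.C (j : ℚ) * Polynomial.X) ^ j) *
    ∏ j ∈ Finset.Icc (k + 1) (2 * k), (1 + Polynomial.C (j : ℚ) * Polynomial.X) ^ (2 * k - j)

theorem stmt_10 (k : ℕ) (hk : 0 < k) :
    (genPoly k).coeff 3 = (1 / 6) * (k : ℚ) ^ 9 - (7 / 12) * (k : ℚ) ^ 7 + (7 / 12) * (k : ℚ) ^ 5 - (1 / 6) * (k : ℚ) ^ 3 := by
  have e1 : Finset.Icc 1 k = Finset.Ioc 0 k := Finset.Icc_add_one_left_eq_Ioc 0 k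
  have e2 : Finset.Icc (k+1) (2*k) = Finset.Ioc k (2*k) := Finset.Icc_add_one_left_eq_Ioc k (2*k)
  unfold genPoly
  rw [e1, e2, coeff_mul_three]
  obtain ⟨p0, p1, p2, p3⟩ := prod_coeffs (Finset.Ioc 0 k) (fun j => j)
  obtain ⟨q0, q1, q2, q3⟩ := prod_coeffs (Finset.Ioc k (2*k)) (fun j => 2*k - j)
  rw [p0, p1, p2, p3, q0, q1, q2, q3,
    sum_id_mul, sum_id_mul, sum_id_mul,
    sum_m2 k 1, sum_m2 k 2, sum_m2 k 3]
  norm_num [pow_one]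
  rw [sumpow1, sumpow1, sumpow2, sumpow2, sumpow3, sumpow3, sumpow4, sumpow4]
  push_cast
  ring
end

section
/- For each r ≥ 0 there is a polynomial f_r ∈ ℚ[X] of degree 3r with leading coefficient 1/r! such that, for every positive integer k with k^2 ≥ r, the coefficient of x^r in ∏_{j=1}^{k} (1 + j x)^j ∏_{j=k+1}^{2k} (1 + j x)^{2k-j} equals f_r(k). -/
/-!
Write `genPoly k = ∏_{0 < j ≤ 2k} (1 + j x)^{m_j}` with `m_j = min(j, 2k - j)`. Its logarithmic
derivative `∑_j m_j j / (1 + j x)` gives Newton's recursion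
`(r + 1) a_{r+1} = ∑_{i ≤ r} (-1)^(r-i) p_{r+1-i} a_i` for the coefficients `a_r`, where
`p_t = ∑_j m_j j^t`. By Faulhaber's formula `p_t` is a polynomial in `k` of degree at most `t + 2`,
and `p_1 = k^3`. So by induction `a_r` is a polynomial in `k` of degree at most `3r`, and in the
recursion only the term `p_1 a_r` reaches degree `3(r + 1)`, whence the top coefficient `1/r!`.
-/

open Polynomial

open Finset Nat
open scoped PowerSeries

section LogDerivative

variable {R ι : Type*} [CommRing R]

theorem PowerSeries.mk_neg_pow_mul_one_add_C_mul_X (c : R) :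
    PowerSeries.mk (fun n => (-c) ^ n) * (1 + PowerSeries.C c * PowerSeries.X) = 1 := by
  have h := congrArg (PowerSeries.rescale (-c)) (PowerSeries.mk_one_mul_one_sub_eq_one R)
  simpa [PowerSeries.rescale_mk, PowerSeries.rescale_X, sub_eq_add_neg] using h

theorem derivative_one_add_C_mul_X_pow (c : R) (m : ℕ) :
    ((derivative ((1 + C c * X) ^ m) : R[X]) : R⟦X⟧) =
      ((1 + C c * X) ^ m : R[X]) *
        (PowerSeries.C (m * c) * PowerSeries.mk (fun n => (-c) ^ n)) := by
  cases m with
  | zero => simp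
  | succ m =>
    have h := PowerSeries.mk_neg_pow_mul_one_add_C_mul_X c
    simp only [derivative_pow, derivative_add, derivative_one, derivative_C_mul_X, zero_add]
    push_cast [map_mul]
    linear_combination (-(PowerSeries.C ((m : R) + 1) * PowerSeries.C c *
      (1 + PowerSeries.C c * PowerSeries.X) ^ m)) * h

theorem derivative_prod_one_add_C_mul_X_pow (s : Finset ι) (c : ι → R) (m : ι → ℕ) :
    ((derivative (∏ j ∈ s, (1 + C (c j) * X) ^ m j) : R[X]) : R⟦X⟧) =
      ((∏ j ∈ s, (1 + C (c j) * X) ^ m j : R[X]) : R⟦X⟧) *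
        ∑ j ∈ s, PowerSeries.C (m j * c j) * PowerSeries.mk (fun n => (-c j) ^ n) := by
  classical
  induction s using Finset.induction_on with
  | empty => simp
  | insert a s ha ih =>
    rw [prod_insert ha, sum_insert ha, derivative_mul, Polynomial.coe_add, Polynomial.coe_mul,
      Polynomial.coe_mul, ih, derivative_one_add_C_mul_X_pow, Polynomial.coe_mul]
    ring

theorem coeff_succ_prod_one_add_C_mul_X_pow (s : Finset ι) (c : ι → R) (m : ι → ℕ)
    (r : ℕ) :
    ((r : R) + 1) * (∏ j ∈ s, (1 + C (c j) * X) ^ m j).coeff (r + 1) =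
      ∑ i ∈ range (r + 1), (∏ j ∈ s, (1 + C (c j) * X) ^ m j).coeff i *
        ((-1) ^ (r - i) * ∑ j ∈ s, (m j : R) * c j ^ (r + 1 - i)) := by
  have h := congrArg (PowerSeries.coeff r) (derivative_prod_one_add_C_mul_X_pow s c m)
  rw [coeff_coe, coeff_derivative, PowerSeries.coeff_mul,
    Nat.sum_antidiagonal_eq_sum_range_succ_mk] at h
  rw [mul_comm, h]
  refine sum_congr rfl fun i hi => ?_
  have hir : r + 1 - i = r - i + 1 := by have := mem_range.mp hi; omega
  simp only [coeff_coe, map_sum, PowerSeries.coeff_C_mul, PowerSeries.coeff_mk, hir, mul_sum]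
  refine sum_congr rfl fun j _ => ?_
  rw [neg_pow]
  ring

end LogDerivative

noncomputable def faulhaberPoly (p : ℕ) : ℚ[X] :=
  ∑ i ∈ range (p + 1), C (bernoulli' i * (p + 1).choose i / (p + 1)) * X ^ (p + 1 - i)

theorem eval_faulhaberPoly (p n : ℕ) :
    (faulhaberPoly p).eval (n : ℚ) = ∑ j ∈ Ioc 0 n, (j : ℚ) ^ p := by
  rw [← Icc_add_one_left_eq_Ioc, ← Ico_add_one_right_eq_Icc, zero_add, sum_Ico_pow,
    faulhaberPoly, eval_finsetSum]
  simp only [eval_mul, eval_C, eval_pow, eval_X]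
  exact sum_congr rfl fun i _ => by ring

theorem natDegree_faulhaberPoly_le (p : ℕ) : (faulhaberPoly p).natDegree ≤ p + 1 :=
  natDegree_sum_le_of_forall_le _ _ fun _ _ => (natDegree_C_mul_X_pow_le _ _).trans (Nat.sub_le _ _)

theorem coeff_faulhaberPoly_succ (p : ℕ) : (faulhaberPoly p).coeff (p + 1) = 1 / (p + 1) := by
  rw [faulhaberPoly, finsetSum_coeff, sum_eq_single 0]
  · simp
  · intro i hi hi0
    rw [coeff_C_mul_X_pow, if_neg (by have := mem_range.mp hi; omega)]
  · simp

def genPolyExponent (k j : ℕ) : ℕ := if j ≤ k then j else 2 * k - j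

theorem genPoly_eq_prod (k : ℕ) :
    genPoly k = ∏ j ∈ Ioc 0 (2 * k), (1 + C (j : ℚ) * X) ^ genPolyExponent k j := by
  rw [← prod_Ioc_consecutive _ (Nat.zero_le k) (by omega : k ≤ 2 * k), genPoly,
    ← Icc_add_one_left_eq_Ioc, ← Icc_add_one_left_eq_Ioc]
  congr 1 <;> refine prod_congr rfl fun j hj => ?_ <;> have := mem_Icc.mp hj <;>
    simp only [genPolyExponent]
  · rw [if_pos (by omega)]
  · rw [if_neg (by omega)]

noncomputable def genPowerSumPoly (t : ℕ) : ℚ[X] :=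
  2 * faulhaberPoly (t + 1) - (faulhaberPoly (t + 1)).comp (C 2 * X) +
    2 * X * ((faulhaberPoly t).comp (C 2 * X) - faulhaberPoly t)

theorem eval_genPowerSumPoly (t k : ℕ) :
    (genPowerSumPoly t).eval (k : ℚ) =
      ∑ j ∈ Ioc 0 (2 * k), (genPolyExponent k j : ℚ) * j ^ t := by
  have h2k : (C 2 * X : ℚ[X]).eval (k : ℚ) = ((2 * k : ℕ) : ℚ) := by simp
  have hlow : ∑ j ∈ Ioc 0 k, (genPolyExponent k j : ℚ) * j ^ t =
      ∑ j ∈ Ioc 0 k, (j : ℚ) ^ (t + 1) :=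
    sum_congr rfl fun j hj => by
      rw [genPolyExponent, if_pos (mem_Ioc.mp hj).2, pow_succ, mul_comm]
  have hhigh : ∑ j ∈ Ioc k (2 * k), (genPolyExponent k j : ℚ) * j ^ t =
      ∑ j ∈ Ioc k (2 * k), (2 * k * (j : ℚ) ^ t - (j : ℚ) ^ (t + 1)) :=
    sum_congr rfl fun j hj => by
      have := mem_Ioc.mp hj
      rw [genPolyExponent, if_neg (by omega), Nat.cast_sub this.2]
      push_cast
      ring
  have hsplit (f : ℕ → ℚ) :
      ∑ j ∈ Ioc k (2 * k), f j = ∑ j ∈ Ioc 0 (2 * k), f j - ∑ j ∈ Ioc 0 k, f j := by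
    rw [← sum_Ioc_consecutive f (Nat.zero_le k) (by omega : k ≤ 2 * k)]
    ring
  rw [← sum_Ioc_consecutive _ (Nat.zero_le k) (by omega : k ≤ 2 * k), hlow, hhigh,
    sum_sub_distrib, ← mul_sum, hsplit, hsplit, genPowerSumPoly]
  simp only [eval_add, eval_sub, eval_mul, eval_comp, h2k, eval_faulhaberPoly, eval_X, eval_ofNat]
  ring

theorem natDegree_genPowerSumPoly_le (t : ℕ) : (genPowerSumPoly t).natDegree ≤ t + 2 := by
  have hcomp (p : ℕ) : ((faulhaberPoly p).comp (C 2 * X)).natDegree ≤ p + 1 :=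
    natDegree_comp_le.trans (by
      simpa [natDegree_C_mul_X (2 : ℚ) two_ne_zero] using natDegree_faulhaberPoly_le p)
  apply natDegree_add_le_of_degree_le
  · refine (natDegree_sub_le _ _).trans (max_le ?_ (hcomp _))
    exact (natDegree_mul_le_of_le (natDegree_ofNat 2).le (natDegree_faulhaberPoly_le _)).trans
      (by omega)
  · refine (natDegree_mul_le_of_le (natDegree_mul_le_of_le (natDegree_ofNat 2).le natDegree_X_le)
      (natDegree_sub_le_of_le (hcomp t) (natDegree_faulhaberPoly_le t))).trans (by omega)

theorem coeff_genPowerSumPoly_one_three : (genPowerSumPoly 1).coeff 3 = 1 := by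
  have h2 := coeff_faulhaberPoly_succ 2
  have h1 := coeff_faulhaberPoly_succ 1
  norm_num at h1 h2
  norm_num [genPowerSumPoly, mul_assoc, h1, h2]

-- Newton's recursion `coeff_succ_prod_one_add_C_mul_X_pow` solved for `a_{r+1}`.
noncomputable def genCoeffPoly : ℕ → ℚ[X]
  | 0 => 1
  | r + 1 => ∑ i : Fin (r + 1),
      C ((-1 : ℚ) ^ (r - i : ℕ) / (r + 1)) * (genPowerSumPoly (r + 1 - i) * genCoeffPoly i)

theorem genCoeffPoly_succ (r : ℕ) : genCoeffPoly (r + 1) = ∑ i ∈ range (r + 1),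
    C ((-1 : ℚ) ^ (r - i) / (r + 1)) * (genPowerSumPoly (r + 1 - i) * genCoeffPoly i) := by
  rw [genCoeffPoly, Fin.sum_univ_eq_sum_range
    (fun i => C ((-1 : ℚ) ^ (r - i) / (r + 1)) * (genPowerSumPoly (r + 1 - i) * genCoeffPoly i))]

theorem coeff_genPoly (k r : ℕ) : (genPoly k).coeff r = (genCoeffPoly r).eval (k : ℚ) := by
  induction r using Nat.strong_induction_on with
  | _ r ih =>
  cases r with
  | zero => simp [genCoeffPoly, genPoly, coeff_zero_eq_eval_zero, eval_prod]
  | succ r =>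
    have hr : (r : ℚ) + 1 ≠ 0 := by positivity
    have newton := coeff_succ_prod_one_add_C_mul_X_pow (Ioc 0 (2 * k)) (fun j => (j : ℚ))
      (genPolyExponent k) r
    rw [← genPoly_eq_prod] at newton
    rw [genCoeffPoly_succ, eval_finsetSum, ← mul_right_inj' hr, newton, mul_sum]
    refine sum_congr rfl fun i hi => ?_
    rw [ih i (mem_range.mp hi), eval_mul, eval_mul, eval_C, eval_genPowerSumPoly]
    field_simp

theorem natDegree_genCoeffPoly_term_le (r i : ℕ) :
    (C ((-1 : ℚ) ^ (r - i) / (r + 1)) *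
        (genPowerSumPoly (r + 1 - i) * genCoeffPoly i)).natDegree ≤
      (r + 1 - i) + 2 + (genCoeffPoly i).natDegree :=
  (natDegree_C_mul_le _ _).trans (natDegree_mul_le_of_le (natDegree_genPowerSumPoly_le _) le_rfl)

theorem natDegree_genCoeffPoly_le (r : ℕ) : (genCoeffPoly r).natDegree ≤ 3 * r := by
  induction r using Nat.strong_induction_on with
  | _ r ih =>
  cases r with
  | zero => simp [genCoeffPoly]
  | succ r =>
    rw [genCoeffPoly_succ]
    refine natDegree_sum_le_of_forall_le _ _ fun i hi => ?_
    have hir := mem_range.mp hi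
    have := ih i hir
    exact (natDegree_genCoeffPoly_term_le r i).trans (by omega)

theorem coeff_genCoeffPoly_three_mul (r : ℕ) : (genCoeffPoly r).coeff (3 * r) = 1 / r ! := by
  induction r with
  | zero => simp [genCoeffPoly]
  | succ r ih =>
    rw [genCoeffPoly_succ, finsetSum_coeff, sum_eq_single_of_mem r (self_mem_range_succ r)]
    · rw [show 3 * (r + 1) = 3 + 3 * r by ring, coeff_C_mul, Nat.sub_self,
        Nat.add_sub_cancel_left, coeff_mul_add_eq_of_natDegree_le (natDegree_genPowerSumPoly_le 1)
          (natDegree_genCoeffPoly_le r), coeff_genPowerSumPoly_one_three, ih, Nat.factorial_succ]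
      push_cast
      field_simp
    · intro i hi hir
      have := mem_range.mp hi
      have := natDegree_genCoeffPoly_le i
      exact coeff_eq_zero_of_natDegree_lt
        ((natDegree_genCoeffPoly_term_le r i).trans_lt (by omega))

theorem natDegree_genCoeffPoly (r : ℕ) : (genCoeffPoly r).natDegree = 3 * r := by
  refine (natDegree_genCoeffPoly_le r).antisymm (le_natDegree_of_ne_zero ?_)
  rw [coeff_genCoeffPoly_three_mul]
  positivity

theorem leadingCoeff_genCoeffPoly (r : ℕ) : (genCoeffPoly r).leadingCoeff = 1 / r ! := by
  rw [leadingCoeff, natDegree_genCoeffPoly, coeff_genCoeffPoly_three_mul]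

theorem stmt_12 (r : ℕ) :
    ∃ f : Polynomial ℚ, f.natDegree = 3 * r ∧ f.leadingCoeff = 1 / (r.factorial : ℚ) ∧
      ∀ k : ℕ, 0 < k → r ≤ k ^ 2 → (genPoly k).coeff r = f.eval (k : ℚ) := by
  exact ⟨genCoeffPoly r, natDegree_genCoeffPoly r, leadingCoeff_genCoeffPoly r,
    fun k _ _ => coeff_genPoly k r⟩
end

section
/- Let u > 0 and k a positive integer, and define f(z) = ∑_{j=1}^{k} j log(z + j) + ∑_{j=k+1}^{2k} (2k - j) log(z + j) - (k^2 - r) log z for z > 0, where r is such that u is a critical point of f (i.e. f'(u) = 0). Then f''(u) > 0. -/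
theorem stmt_17 (k : ℕ) (hk : 0 < k) (r u : ℝ) (hr0 : 0 < r) (hrk : r < (k : ℝ) ^ 2)
    (hu : 0 < u)
    -- `f'(u) = 0`:
    (hcrit : (∑ j ∈ Finset.Icc 1 k, (j : ℝ) / (u + j)) +
        (∑ j ∈ Finset.Icc (k + 1) (2 * k), ((2 * k : ℝ) - j) / (u + j)) =
        ((k : ℝ) ^ 2 - r) / u) :
    -- `f''(u) > 0`:
    ((k : ℝ) ^ 2 - r) / u ^ 2
      - (∑ j ∈ Finset.Icc 1 k, (j : ℝ) / (u + j) ^ 2)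
      - (∑ j ∈ Finset.Icc (k + 1) (2 * k), ((2 * k : ℝ) - j) / (u + j) ^ 2) > 0 := by
  have hrw : ((k : ℝ) ^ 2 - r) / u ^ 2 =
      (∑ j ∈ Finset.Icc 1 k, (j : ℝ) / (u + j) / u) +
      (∑ j ∈ Finset.Icc (k + 1) (2 * k), ((2 * k : ℝ) - j) / (u + j) / u) := by
    rw [← Finset.sum_div, ← Finset.sum_div, ← add_div, hcrit, div_div, sq]; ring_nf
  have h1 : (∑ j ∈ Finset.Icc 1 k, (j : ℝ) / (u + j) ^ 2) <
      ∑ j ∈ Finset.Icc 1 k, (j : ℝ) / (u + j) / u := by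
    apply Finset.sum_lt_sum_of_nonempty
    · exact ⟨1, Finset.mem_Icc.mpr ⟨le_refl 1, hk⟩⟩
    · intro j hj
      have hj1 : 1 ≤ j := (Finset.mem_Icc.mp hj).1
      have hjpos : (0 : ℝ) < j := by exact_mod_cast hj1
      have huj : 0 < u + j := by linarith
      rw [div_div]
      apply div_lt_div_of_pos_left hjpos (by positivity)
      nlinarith
  have h2 : (∑ j ∈ Finset.Icc (k + 1) (2 * k), ((2 * k : ℝ) - j) / (u + j) ^ 2) ≤
      ∑ j ∈ Finset.Icc (k + 1) (2 * k), ((2 * k : ℝ) - j) / (u + j) / u := by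
    apply Finset.sum_le_sum
    intro j hj
    have hj2 : j ≤ 2 * k := (Finset.mem_Icc.mp hj).2
    have hco : (0 : ℝ) ≤ (2 * k : ℝ) - j := by
      have : (j : ℝ) ≤ (2 * k : ℝ) := by exact_mod_cast hj2
      linarith
    have hj1 : (0 : ℝ) ≤ (j : ℝ) := Nat.cast_nonneg j
    have huj : 0 < u + j := by linarith
    rw [div_div]
    apply div_le_div_of_nonneg_left hco (by positivity)
    nlinarith
  rw [hrw]
  linarith
end
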